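/- The entropy of the Gács–Körner maximal common function is invariant under sufficient statistic substitution: if X → g₁(X) → Y and X → g₂(Y) → Y, then H(mcf(X, Y)) = H(mcf(g₁(X), g₂(Y))). -/

import Mathlib

open scoped Classical
open Finset Real

noncomputable section

variable {Ω : Type*} [Fintype Ω]

/-- Pushforward probability of value `x` under random variable `X` w.r.t. pmf `p`. -/
def dist' {α : Type*} (p : Ω → ℝ) (X : Ω → α) (x : α) : ℝ :=
  ∑ ω, if X ω = x then p ω else 0

/-- Shannon entropy, base 2. -/
def ent {α : Type*} [Fintype α] (p : Ω → ℝ) (X : Ω → α) : ℝ :=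
  -∑ x, dist' p X x * Real.logb 2 (dist' p X x)

/-- Conditional entropy `H(X | Y)`. -/
def condEnt {α β : Type*} [Fintype α] [Fintype β] (p : Ω → ℝ) (X : Ω → α) (Y : Ω → β) : ℝ :=
  ent p (fun ω => (X ω, Y ω)) - ent p Y

/-- Mutual information `I(X ∧ Y)`. -/
def mi {α β : Type*} [Fintype α] [Fintype β] (p : Ω → ℝ) (X : Ω → α) (Y : Ω → β) : ℝ :=
  ent p X + ent p Y - ent p (fun ω => (X ω, Y ω))

/-- Conditional mutual information `I(X ∧ Y | Z)`. -/
def cmi {α β γ : Type*} [Fintype α] [Fintype β] [Fintype γ]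
    (p : Ω → ℝ) (X : Ω → α) (Y : Ω → β) (Z : Ω → γ) : ℝ :=
  ent p (fun ω => (X ω, Z ω)) + ent p (fun ω => (Y ω, Z ω))
    - ent p (fun ω => ((X ω, Y ω), Z ω)) - ent p Z

/-- `p` is a probability mass function on `Ω`. -/
def IsPMF (p : Ω → ℝ) : Prop := (∀ ω, 0 ≤ p ω) ∧ ∑ ω, p ω = 1

/-- `B` is almost surely a function of `A`. -/
def asFun {α β : Type*} (p : Ω → ℝ) (A : Ω → α) (B : Ω → β) : Prop :=
  ∃ f : α → β, (∑ ω, if f (A ω) = B ω then p ω else 0) = 1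

/-- `M` is a Gács–Körner maximal common function of `X` and `Y`. -/
def IsMCF {α β γ : Type*} (p : Ω → ℝ) (X : Ω → α) (Y : Ω → β) (M : Ω → γ) : Prop :=
  asFun p X M ∧ asFun p Y M ∧
  ∀ (δ : Type) (V : Ω → δ), asFun p X V → asFun p Y V → asFun p M V

/-!
A common function `V` of `X` and `Y` is constant along the `X`-fibres and along the `Y`-fibres
of the support of `p`. If `I(X ∧ Y | Z) = 0`, the joint law factors as
`P(x, y, z) = P(x, z) P(y, z) / P(z)`, so any two support points with the same value of `Z` are
linked through a third support point sharing `X` with the first and `Y` with the second; hence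
`V` is also a function of `Z`. With `Z = g₁(X)` and `Z = g₂(Y)` this makes `mcf(X, Y)` a common
function of `g₁(X)` and `g₂(Y)`, while `mcf(g₁(X), g₂(Y))` is trivially a common function of `X`
and `Y`. By maximality the two determine each other almost surely, so their entropies agree.
-/

open InformationTheory

section Distribution

variable {α β γ : Type*} {p : Ω → ℝ}

theorem sum_dist'_mul [Fintype α] (p : Ω → ℝ) (A : Ω → α) (F : α → ℝ) :
    ∑ x, dist' p A x * F x = ∑ ω, p ω * F (A ω) := by
  simp only [dist', Finset.sum_mul, ite_mul, zero_mul]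
  rw [Finset.sum_comm]
  simp

theorem sum_dist' [Fintype α] (p : Ω → ℝ) (A : Ω → α) : ∑ x, dist' p A x = ∑ ω, p ω := by
  simpa using sum_dist'_mul p A 1

theorem sum_dist'_prodMk [Fintype α] (p : Ω → ℝ) (A : Ω → α) (Z : Ω → γ) (z : γ) :
    ∑ x, dist' p (fun ω => (A ω, Z ω)) (x, z) = dist' p Z z := by
  simp only [dist', Prod.mk.injEq]
  rw [Finset.sum_comm]
  refine Finset.sum_congr rfl fun ω _ => ?_
  by_cases hz : Z ω = z <;> simp [hz]

theorem dist'_nonneg (hp : ∀ ω, 0 ≤ p ω) (A : Ω → α) (a : α) : 0 ≤ dist' p A a :=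
  Finset.sum_nonneg fun ω _ => by split_ifs <;> simp [hp ω]

theorem dist'_le_dist'_comp (hp : ∀ ω, 0 ≤ p ω) (A : Ω → α) (f : α → β) (a : α) :
    dist' p A a ≤ dist' p (fun ω => f (A ω)) (f a) :=
  Finset.sum_le_sum fun ω _ => by
    by_cases h : A ω = a
    · simp [h]
    · rw [if_neg h]
      split_ifs <;> simp [hp ω]

theorem dist'_pos (hp : ∀ ω, 0 ≤ p ω) (A : Ω → α) {ω : Ω} (hω : p ω ≠ 0) :
    0 < dist' p A (A ω) := by
  have hle : p ω ≤ dist' p A (A ω) := by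
    simpa [dist'] using Finset.single_le_sum (f := fun ω' => if A ω' = A ω then p ω' else 0)
      (fun ω' _ => by split_ifs <;> simp [hp ω']) (Finset.mem_univ ω)
  exact (lt_of_le_of_ne (hp ω) hω.symm).trans_le hle

theorem exists_of_dist'_ne_zero {A : Ω → α} {a : α} (h : dist' p A a ≠ 0) :
    ∃ ω, p ω ≠ 0 ∧ A ω = a := by
  obtain ⟨ω, -, hω⟩ := Finset.exists_ne_zero_of_sum_ne_zero h
  by_cases hA : A ω = a
  · exact ⟨ω, by simpa [hA] using hω, hA⟩
  · simp [hA] at hω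

theorem ent_eq_neg_sum_logb [Fintype α] (p : Ω → ℝ) (A : Ω → α) :
    ent p A = -∑ ω, p ω * logb 2 (dist' p A (A ω)) := by
  rw [ent, sum_dist'_mul p A fun x => logb 2 (dist' p A x)]

end Distribution

section FunctionOf

variable {α β γ : Type*} {p : Ω → ℝ} {A : Ω → α} {B : Ω → β}

theorem asFun_iff_exists_forall (hp : IsPMF p) :
    asFun p A B ↔ ∃ f : α → β, ∀ ω, p ω ≠ 0 → f (A ω) = B ω := by
  refine exists_congr fun f => ?_
  rw [← hp.2, Finset.sum_eq_sum_iff_of_le fun ω _ => by split_ifs <;> simp [hp.1 ω]]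
  refine forall_congr' fun ω => ?_
  by_cases hf : f (A ω) = B ω <;> simp [hf, eq_comm]

theorem asFun_iff_forall_eq (hp : IsPMF p) :
    asFun p A B ↔ ∀ ω ω', p ω ≠ 0 → p ω' ≠ 0 → A ω = A ω' → B ω = B ω' := by
  rw [asFun_iff_exists_forall hp]
  constructor
  · rintro ⟨f, hf⟩ ω ω' hω hω' hA
    rw [← hf ω hω, ← hf ω' hω', hA]
  · intro hB
    obtain ⟨ω₀, -, -⟩ := Finset.exists_ne_zero_of_sum_ne_zero (hp.2 ▸ one_ne_zero)
    have : Nonempty Ω := ⟨ω₀⟩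
    refine ⟨fun a => B (Classical.epsilon fun ω => p ω ≠ 0 ∧ A ω = a), fun ω hω => ?_⟩
    obtain ⟨hε, hεA⟩ := Classical.epsilon_spec (p := fun ω' => p ω' ≠ 0 ∧ A ω' = A ω) ⟨ω, hω, rfl⟩
    exact hB _ _ hε hω hεA

theorem asFun.of_comp {f : α → γ} (h : asFun p (fun ω => f (A ω)) B) : asFun p A B :=
  let ⟨g, hg⟩ := h
  ⟨fun a => g (f a), hg⟩

theorem asFun.comp (hp : IsPMF p) (h : asFun p A B) (f : β → γ) :
    asFun p A fun ω => f (B ω) := by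
  rw [asFun_iff_forall_eq hp] at h ⊢
  exact fun ω ω' hω hω' hA => congrArg f (h ω ω' hω hω' hA)

theorem ent_eq_of_asFun_of_asFun [Fintype α] [Fintype β] (hp : IsPMF p)
    (hAB : asFun p A B) (hBA : asFun p B A) : ent p A = ent p B := by
  rw [asFun_iff_forall_eq hp] at hAB hBA
  have hatom : ∀ ω, p ω ≠ 0 → dist' p A (A ω) = dist' p B (B ω) := fun ω hω =>
    Finset.sum_congr rfl fun ω' _ => by
      by_cases hω' : p ω' = 0
      · simp [hω']
      · have : A ω' = A ω ↔ B ω' = B ω := ⟨hAB ω' ω hω' hω, hBA ω' ω hω' hω⟩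
        simp only [this]
  rw [ent_eq_neg_sum_logb, ent_eq_neg_sum_logb]
  congr 1
  refine Finset.sum_congr rfl fun ω _ => ?_
  by_cases hω : p ω = 0
  · simp [hω]
  · rw [hatom ω hω]

end FunctionOf

section ConditionalIndependence

variable {α β γ δ : Type*} {p : Ω → ℝ}

/-- `P(x, z) P(y, z) / P(z)`; where `P(z) = 0` the junk value `0 / 0 = 0` is the right one. -/
def condIndepLaw (p : Ω → ℝ) (X : Ω → α) (Y : Ω → β) (Z : Ω → γ) (v : (α × β) × γ) : ℝ :=
  dist' p (fun ω => (X ω, Z ω)) (v.1.1, v.2) * dist' p (fun ω => (Y ω, Z ω)) (v.1.2, v.2)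
    / dist' p Z v.2

theorem condIndepLaw_nonneg (hp : ∀ ω, 0 ≤ p ω) (X : Ω → α) (Y : Ω → β) (Z : Ω → γ)
    (v : (α × β) × γ) : 0 ≤ condIndepLaw p X Y Z v :=
  div_nonneg (mul_nonneg (dist'_nonneg hp _ _) (dist'_nonneg hp _ _)) (dist'_nonneg hp _ _)

theorem sum_condIndepLaw [Fintype α] [Fintype β] [Fintype γ] (hp : IsPMF p)
    (X : Ω → α) (Y : Ω → β) (Z : Ω → γ) : ∑ v, condIndepLaw p X Y Z v = 1 := by
  calc ∑ v, condIndepLaw p X Y Z v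
      = ∑ z, (∑ x, dist' p (fun ω => (X ω, Z ω)) (x, z))
          * (∑ y, dist' p (fun ω => (Y ω, Z ω)) (y, z)) / dist' p Z z := by
        rw [Fintype.sum_prod_type_right]
        refine Finset.sum_congr rfl fun z _ => ?_
        rw [Fintype.sum_prod_type, Finset.sum_mul_sum, Finset.sum_div]
        simp only [condIndepLaw, Finset.sum_div]
    _ = ∑ z, dist' p Z z := by simp only [sum_dist'_prodMk, mul_self_div_self]
    _ = 1 := by rw [sum_dist', hp.2]

theorem dist'_eq_zero_of_condIndepLaw_eq_zero (hp : ∀ ω, 0 ≤ p ω)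
    (X : Ω → α) (Y : Ω → β) (Z : Ω → γ) {v : (α × β) × γ} (h : condIndepLaw p X Y Z v = 0) :
    dist' p (fun ω => ((X ω, Y ω), Z ω)) v = 0 := by
  have hXZ := dist'_le_dist'_comp hp (fun ω => ((X ω, Y ω), Z ω)) (fun v => (v.1.1, v.2)) v
  have hYZ := dist'_le_dist'_comp hp (fun ω => ((X ω, Y ω), Z ω)) (fun v => (v.1.2, v.2)) v
  have hZ := dist'_le_dist'_comp hp (fun ω => ((X ω, Y ω), Z ω)) Prod.snd v
  refine le_antisymm ?_ (dist'_nonneg hp _ _)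
  rcases div_eq_zero_iff.mp h with h | h
  · rcases mul_eq_zero.mp h with h | h
    · exact hXZ.trans_eq h
    · exact hYZ.trans_eq h
  · exact hZ.trans_eq h

theorem cmi_eq_sum_mul_logb [Fintype α] [Fintype β] [Fintype γ] (hp : ∀ ω, 0 ≤ p ω)
    (X : Ω → α) (Y : Ω → β) (Z : Ω → γ) :
    cmi p X Y Z = ∑ v, dist' p (fun ω => ((X ω, Y ω), Z ω)) v
      * logb 2 (dist' p (fun ω => ((X ω, Y ω), Z ω)) v / condIndepLaw p X Y Z v) := by
  have hterm : ∀ ω, p ω * logb 2 (dist' p (fun ω => ((X ω, Y ω), Z ω)) ((X ω, Y ω), Z ω)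
      / condIndepLaw p X Y Z ((X ω, Y ω), Z ω))
      = p ω * logb 2 (dist' p (fun ω => ((X ω, Y ω), Z ω)) ((X ω, Y ω), Z ω))
        + p ω * logb 2 (dist' p Z (Z ω))
        - p ω * logb 2 (dist' p (fun ω => (X ω, Z ω)) (X ω, Z ω))
        - p ω * logb 2 (dist' p (fun ω => (Y ω, Z ω)) (Y ω, Z ω)) := by
    intro ω
    by_cases hω : p ω = 0
    · simp [hω]
    have hXYZ := dist'_pos hp (fun ω => ((X ω, Y ω), Z ω)) hω
    have hXZ := dist'_pos hp (fun ω => (X ω, Z ω)) hω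
    have hYZ := dist'_pos hp (fun ω => (Y ω, Z ω)) hω
    have hZ := dist'_pos hp Z hω
    simp only [condIndepLaw]
    rw [logb_div hXYZ.ne' (div_pos (mul_pos hXZ hYZ) hZ).ne', logb_div (mul_pos hXZ hYZ).ne' hZ.ne',
      logb_mul hXZ.ne' hYZ.ne']
    ring
  rw [sum_dist'_mul, cmi, ent_eq_neg_sum_logb, ent_eq_neg_sum_logb, ent_eq_neg_sum_logb,
    ent_eq_neg_sum_logb]
  simp only [hterm, Finset.sum_add_distrib, Finset.sum_sub_distrib]
  ring

theorem dist'_eq_condIndepLaw_of_cmi_eq_zero [Fintype α] [Fintype β] [Fintype γ] (hp : IsPMF p)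
    {X : Ω → α} {Y : Ω → β} {Z : Ω → γ} (h : cmi p X Y Z = 0) (v : (α × β) × γ) :
    dist' p (fun ω => ((X ω, Y ω), Z ω)) v = condIndepLaw p X Y Z v := by
  have hcmi := cmi_eq_sum_mul_logb hp.1 X Y Z
  have hsum_a := sum_dist' p fun ω => ((X ω, Y ω), Z ω)
  have hsum_b := sum_condIndepLaw hp X Y Z
  set a := dist' p fun ω => ((X ω, Y ω), Z ω)
  set b := condIndepLaw p X Y Z
  have hb0 := condIndepLaw_nonneg hp.1 X Y Z
  -- `cmi` is the Kullback–Leibler divergence of `a` from `b`: a sum of the nonnegative terms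
  -- `b · klFun (a / b)`, each of which vanishes only where `a = b`.
  have hterm : ∀ v, b v * klFun (a v / b v) = a v * logb 2 (a v / b v) * log 2 + b v - a v := by
    intro v
    by_cases hbv : b v = 0
    · simp [hbv, a, dist'_eq_zero_of_condIndepLaw_eq_zero hp.1 X Y Z hbv]
    · have hlog2 : log 2 ≠ 0 := (log_pos one_lt_two).ne'
      rw [klFun_apply, logb]
      field_simp
  have hkl : ∑ v, b v * klFun (a v / b v) = 0 := by
    rw [Finset.sum_congr rfl fun v _ => hterm v, Finset.sum_sub_distrib, Finset.sum_add_distrib,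
      ← Finset.sum_mul, ← hcmi, h, hsum_a, hsum_b, hp.2]
    ring
  have hklv := (Finset.sum_eq_zero_iff_of_nonneg fun v _ => mul_nonneg (hb0 v)
    (klFun_nonneg (div_nonneg (dist'_nonneg hp.1 _ _) (hb0 v)))).mp hkl v (Finset.mem_univ v)
  by_cases hbv : b v = 0
  · rw [hbv]
    exact dist'_eq_zero_of_condIndepLaw_eq_zero hp.1 X Y Z hbv
  · rw [mul_eq_zero, or_iff_right hbv,
      klFun_eq_zero_iff (div_nonneg (dist'_nonneg hp.1 _ _) (hb0 v)), div_eq_one_iff_eq hbv] at hklv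
    exact hklv

theorem exists_of_cmi_eq_zero [Fintype α] [Fintype β] [Fintype γ] (hp : IsPMF p)
    {X : Ω → α} {Y : Ω → β} {Z : Ω → γ} (h : cmi p X Y Z = 0) {ω₁ ω₂ : Ω}
    (h₁ : p ω₁ ≠ 0) (h₂ : p ω₂ ≠ 0) (hZ : Z ω₁ = Z ω₂) :
    ∃ ω, p ω ≠ 0 ∧ X ω = X ω₁ ∧ Y ω = Y ω₂ := by
  have hYZ : 0 < dist' p (fun ω => (Y ω, Z ω)) (Y ω₂, Z ω₁) :=
    hZ ▸ dist'_pos hp.1 (fun ω => (Y ω, Z ω)) h₂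
  have hpos : 0 < condIndepLaw p X Y Z ((X ω₁, Y ω₂), Z ω₁) :=
    div_pos (mul_pos (dist'_pos hp.1 (fun ω => (X ω, Z ω)) h₁) hYZ) (dist'_pos hp.1 Z h₁)
  rw [← dist'_eq_condIndepLaw_of_cmi_eq_zero hp h] at hpos
  obtain ⟨ω, hω, hV⟩ := exists_of_dist'_ne_zero hpos.ne'
  simp only [Prod.mk.injEq] at hV
  exact ⟨ω, hω, hV.1.1, hV.1.2⟩

theorem asFun_of_cmi_eq_zero [Fintype α] [Fintype β] [Fintype γ] (hp : IsPMF p)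
    {X : Ω → α} {Y : Ω → β} {Z : Ω → γ} (h : cmi p X Y Z = 0) {V : Ω → δ}
    (hX : asFun p X V) (hY : asFun p Y V) : asFun p Z V := by
  rw [asFun_iff_forall_eq hp] at hX hY ⊢
  intro ω₁ ω₂ h₁ h₂ hZ
  obtain ⟨ω, hω, hXω, hYω⟩ := exists_of_cmi_eq_zero hp h h₁ h₂ hZ
  exact (hX ω ω₁ hω h₁ hXω).symm.trans (hY ω ω₂ hω h₂ hYω)

end ConditionalIndependence

theorem IsMCF.asFun_of_asFun {α β γ δ : Type*} [Fintype δ] {p : Ω → ℝ} (hp : IsPMF p)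
    {X : Ω → α} {Y : Ω → β} {M : Ω → γ} (hM : IsMCF p X Y M) {V : Ω → δ}
    (hX : asFun p X V) (hY : asFun p Y V) : asFun p M V := by
  let e := Fintype.equivFin δ
  simpa using (hM.2.2 _ (fun ω => e (V ω)) (hX.comp hp e) (hY.comp hp e)).comp hp e.symm

/-- `H(mcf(X,Y)) = H(mcf(g₁(X), g₂(Y)))` under the sufficiency Markov chains. -/
theorem stmt8 {Ω 𝒳 𝒴 γ₁ γ₂ γ₃ γ₄ : Type*} [Fintype Ω] [Fintype 𝒳] [Fintype 𝒴]
    [Fintype γ₁] [Fintype γ₂] [Fintype γ₃] [Fintype γ₄]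
    (p : Ω → ℝ) (hp : IsPMF p) (X : Ω → 𝒳) (Y : Ω → 𝒴)
    (g₁ : 𝒳 → γ₁) (g₂ : 𝒴 → γ₂)
    (hg₁ : cmi p X Y (fun ω => g₁ (X ω)) = 0)
    (hg₂ : cmi p X Y (fun ω => g₂ (Y ω)) = 0)
    (M : Ω → γ₃) (M' : Ω → γ₄)
    (hM : IsMCF p X Y M)
    (hM' : IsMCF p (fun ω => g₁ (X ω)) (fun ω => g₂ (Y ω)) M') :
    ent p M = ent p M' := by
  have hMM' : asFun p M M' := hM.asFun_of_asFun hp hM'.1.of_comp hM'.2.1.of_comp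
  have hM'M : asFun p M' M := hM'.asFun_of_asFun hp
    (asFun_of_cmi_eq_zero hp hg₁ hM.1 hM.2.1) (asFun_of_cmi_eq_zero hp hg₂ hM.1 hM.2.1)
  exact ent_eq_of_asFun_of_asFun hp hMM' hM'M
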